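/- arXiv:2202.10947 — 2 statements merged into one kernel-verified Lean document; each statement's English description precedes it below -/
import Mathlib

section
/- Quantitative continuity of the regularized partition-function energy: if C_K ≥ 0 is a bound with |K(x,y)| ≤ C_K for all x,y ∈ Ω, then for all Borel probability measures p₁, p₂ on Ω, |β⁻¹ log Z_q(p₁) − β⁻¹ log Z_q(p₂)| ≤ exp(2 β C_K) · ∫ |V(y,p₁) − V(y,p₂)| dμ(y). -/
open MeasureTheory Real

lemma aux_abs_int_le {α : Type*} [MeasurableSpace α] (ν : Measure α) (f : α → ℝ) :
    |∫ x, f x ∂ν| ≤ ∫ x, |f x| ∂ν := by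
  simpa [Real.norm_eq_abs] using norm_integral_le_integral_norm (μ := ν) f

lemma aux_cont_integrable {α : Type*} [TopologicalSpace α] [CompactSpace α]
    [MeasurableSpace α] [OpensMeasurableSpace α] [T2Space α]
    (ν : Measure α) [IsFiniteMeasure ν] {f : α → ℝ} (hf : Continuous f) :
    Integrable f ν := by
  rw [← integrableOn_univ]
  exact hf.continuousOn.integrableOn_compact isCompact_univ

lemma aux_abs_log_sub_log_le {a b m : ℝ} (hm : 0 < m) (ha : m ≤ a) (hb : m ≤ b) :
    |Real.log a - Real.log b| ≤ m⁻¹ * |a - b| := by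
  wlog h : b ≤ a generalizing a b
  · have := this hb ha (le_of_not_ge h)
    rw [abs_sub_comm, abs_sub_comm a b]; exact this
  have ha0 : 0 < a := lt_of_lt_of_le hm ha
  have hb0 : 0 < b := lt_of_lt_of_le hm hb
  have hlog : Real.log a - Real.log b = Real.log (a / b) := (Real.log_div ha0.ne' hb0.ne').symm
  have h1 : Real.log (a / b) ≤ a / b - 1 := Real.log_le_sub_one_of_pos (div_pos ha0 hb0)
  have h2 : 0 ≤ Real.log a - Real.log b := by
    rw [sub_nonneg]; exact Real.log_le_log hb0 h
  rw [abs_of_nonneg h2, abs_of_nonneg (sub_nonneg.2 h), hlog]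
  have h3 : a / b - 1 = (a - b) / b := by field_simp
  have h4 : (a - b) / b ≤ (a - b) / m := by
    apply div_le_div_of_nonneg_left (sub_nonneg.2 h) hm hb
  calc Real.log (a / b) ≤ a / b - 1 := h1
    _ = (a - b) / b := h3
    _ ≤ (a - b) / m := h4
    _ = m⁻¹ * (a - b) := by rw [div_eq_inv_mul]

lemma aux_exp_lipschitz {s t M : ℝ} (hs : s ≤ M) (ht : t ≤ M) :
    |Real.exp s - Real.exp t| ≤ Real.exp M * |s - t| := by
  wlog h : t ≤ s generalizing s t
  · have := this ht hs (le_of_not_ge h)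
    rw [abs_sub_comm, abs_sub_comm s t]; exact this
  have h1 : (t - s) + 1 ≤ Real.exp (t - s) := Real.add_one_le_exp _
  have h2 : Real.exp s * Real.exp (t - s) = Real.exp t := by
    rw [← Real.exp_add]; ring_nf
  have h3 : Real.exp s ≤ Real.exp M := Real.exp_le_exp.2 hs
  have hes : 0 < Real.exp s := Real.exp_pos s
  rw [abs_of_nonneg (sub_nonneg.2 (Real.exp_le_exp.2 h)),
    abs_of_nonneg (sub_nonneg.2 h)]
  nlinarith [mul_le_mul_of_nonneg_left h1 hes.le]

/-- Quantitative continuity of the regularized partition-function energy: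
`|β⁻¹ log Z_q(p₁) − β⁻¹ log Z_q(p₂)| ≤ exp(2βC_K) ∫ |V(y,p₁) − V(y,p₂)| dμ(y)`. -/
theorem logZq_quantitative_continuity
    {Ω : Type*} [MetricSpace Ω] [CompactSpace Ω] [MeasurableSpace Ω] [BorelSpace Ω]
    (μ : Measure Ω) [IsProbabilityMeasure μ] (β : ℝ) (hβ : 0 < β)
    (K : Ω × Ω → ℝ) (hK : Continuous K)
    (CK : ℝ) (hCK : 0 ≤ CK) (hKbd : ∀ x y : Ω, |K (x, y)| ≤ CK)
    (V : Ω → Measure Ω → ℝ) (hV : ∀ y p, V y p = ∫ x, K (x, y) ∂p)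
    (Zq : Measure Ω → ℝ) (hZq : ∀ p, Zq p = ∫ y, Real.exp (β * V y p) ∂μ)
    (p₁ p₂ : Measure Ω) [IsProbabilityMeasure p₁] [IsProbabilityMeasure p₂] :
    |β⁻¹ * Real.log (Zq p₁) - β⁻¹ * Real.log (Zq p₂)|
      ≤ Real.exp (2 * β * CK) * ∫ y, |V y p₁ - V y p₂| ∂μ := by
  -- bound on V
  have hVb : ∀ (p : Measure Ω) [IsProbabilityMeasure p], ∀ y, |V y p| ≤ CK := by
    intro p _ y
    rw [hV]
    calc |∫ x, K (x, y) ∂p| ≤ ∫ x, |K (x, y)| ∂p := aux_abs_int_le p _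
      _ ≤ ∫ _x, CK ∂p := by
          apply integral_mono
          · exact aux_cont_integrable p ((hK.comp (continuous_id.prodMk continuous_const)).abs)
          · exact integrable_const _
          · intro x; exact hKbd x y
      _ = CK := by simp
  -- continuity of V in y
  have hVcont : ∀ (p : Measure Ω) [IsProbabilityMeasure p],
      Continuous (fun y => V y p) := by
    intro p _
    have : Continuous (fun y => ∫ x, K (x, y) ∂p) := by
      apply continuous_of_dominated (bound := fun _ => CK)
      · intro y
        exact (hK.comp (continuous_id.prodMk continuous_const)).aestronglyMeasurable
      · intro y
        filter_upwards with x
        simpa using hKbd x y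
      · exact integrable_const _
      · filter_upwards with x
        exact hK.comp (continuous_const.prodMk continuous_id)
    simpa only [← hV] using (by simp only [hV]; exact this : Continuous fun y => V y p)
  have hVc1 := hVcont p₁
  have hVc2 := hVcont p₂
  -- integrability of exp(βV)
  have hint : ∀ (p : Measure Ω) [IsProbabilityMeasure p],
      Integrable (fun y => Real.exp (β * V y p)) μ := by
    intro p _
    exact aux_cont_integrable μ (Real.continuous_exp.comp (continuous_const.mul (hVcont p)))
  have hint1 := hint p₁
  have hint2 := hint p₂
  -- bounds on Zq
  have hZlb : ∀ (p : Measure Ω) [IsProbabilityMeasure p],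
      Real.exp (-(β * CK)) ≤ Zq p := by
    intro p _
    rw [hZq]
    calc Real.exp (-(β * CK)) = ∫ _y, Real.exp (-(β * CK)) ∂μ := by simp
      _ ≤ ∫ y, Real.exp (β * V y p) ∂μ := by
          apply integral_mono (integrable_const _) (hint p)
          intro y
          apply Real.exp_le_exp.2
          have := (abs_le.1 (hVb p y)).1
          nlinarith
  -- pointwise bound for exp difference
  have hptw : ∀ y, |Real.exp (β * V y p₁) - Real.exp (β * V y p₂)|
      ≤ Real.exp (β * CK) * (β * |V y p₁ - V y p₂|) := by
    intro y
    have h1 : β * V y p₁ ≤ β * CK :=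
      mul_le_mul_of_nonneg_left ((abs_le.1 (hVb p₁ y)).2) hβ.le
    have h2 : β * V y p₂ ≤ β * CK :=
      mul_le_mul_of_nonneg_left ((abs_le.1 (hVb p₂ y)).2) hβ.le
    calc |Real.exp (β * V y p₁) - Real.exp (β * V y p₂)|
        ≤ Real.exp (β * CK) * |β * V y p₁ - β * V y p₂| := aux_exp_lipschitz h1 h2
      _ = Real.exp (β * CK) * (β * |V y p₁ - V y p₂|) := by
          rw [← mul_sub, abs_mul, abs_of_pos hβ]
  -- bound |Zq p₁ - Zq p₂|
  have habsV : Integrable (fun y => |V y p₁ - V y p₂|) μ :=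
    aux_cont_integrable μ ((hVc1.sub hVc2).abs)
  have hZdiff : |Zq p₁ - Zq p₂|
      ≤ Real.exp (β * CK) * β * ∫ y, |V y p₁ - V y p₂| ∂μ := by
    rw [hZq, hZq, ← integral_sub hint1 hint2]
    calc |∫ y, (Real.exp (β * V y p₁) - Real.exp (β * V y p₂)) ∂μ|
        ≤ ∫ y, |Real.exp (β * V y p₁) - Real.exp (β * V y p₂)| ∂μ :=
          aux_abs_int_le μ _
      _ ≤ ∫ y, Real.exp (β * CK) * (β * |V y p₁ - V y p₂|) ∂μ := by
          apply integral_mono ((hint1.sub hint2).abs) _ hptw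
          exact (habsV.const_mul β).const_mul _
      _ = Real.exp (β * CK) * β * ∫ y, |V y p₁ - V y p₂| ∂μ := by
          rw [integral_const_mul, integral_const_mul]; ring
  -- log lipschitz step
  have hm : (0:ℝ) < Real.exp (-(β * CK)) := Real.exp_pos _
  have hlog : |Real.log (Zq p₁) - Real.log (Zq p₂)|
      ≤ Real.exp (β * CK) * |Zq p₁ - Zq p₂| := by
    have := aux_abs_log_sub_log_le hm (hZlb p₁) (hZlb p₂)
    rwa [← Real.exp_neg, neg_neg] at this
  have hIpos : 0 ≤ ∫ y, |V y p₁ - V y p₂| ∂μ :=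
    integral_nonneg fun y => abs_nonneg _
  have key : |Real.log (Zq p₁) - Real.log (Zq p₂)|
      ≤ Real.exp (2 * β * CK) * β * ∫ y, |V y p₁ - V y p₂| ∂μ := by
    calc |Real.log (Zq p₁) - Real.log (Zq p₂)|
        ≤ Real.exp (β * CK) * |Zq p₁ - Zq p₂| := hlog
      _ ≤ Real.exp (β * CK) * (Real.exp (β * CK) * β * ∫ y, |V y p₁ - V y p₂| ∂μ) :=
          mul_le_mul_of_nonneg_left hZdiff (Real.exp_pos _).le
      _ = Real.exp (2 * β * CK) * β * ∫ y, |V y p₁ - V y p₂| ∂μ := by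
          rw [show (2:ℝ) * β * CK = β * CK + β * CK by ring, Real.exp_add]; ring
  rw [← mul_sub, abs_mul, abs_of_pos (inv_pos.2 hβ)]
  calc β⁻¹ * |Real.log (Zq p₁) - Real.log (Zq p₂)|
      ≤ β⁻¹ * (Real.exp (2 * β * CK) * β * ∫ y, |V y p₁ - V y p₂| ∂μ) :=
        mul_le_mul_of_nonneg_left key (inv_pos.2 hβ).le
    _ = Real.exp (2 * β * CK) * ∫ y, |V y p₁ - V y p₂| ∂μ := by
        field_simp
end

section
/- If (p_n) is a sequence of Borel probability measures on Ω converging weakly to a Borel probability measure p (i.e., ∫ f dp_n → ∫ f dp for every bounded continuous f : Ω → ℝ), then the Gibbs densities converge uniformly, sup_{y∈Ω} |q[p_n](y) − q[p](y)| → 0, and consequently Ψ(·,p_n) converges to Ψ(·,p) uniformly on Ω: sup_{x∈Ω} |Ψ(x,p_n) − Ψ(x,p)| → 0 as n → ∞. -/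
open MeasureTheory Real Filter

lemma exp_abs_sub_le {a b M : ℝ} (ha : a ≤ M) (hb : b ≤ M) :
    |Real.exp a - Real.exp b| ≤ Real.exp M * |a - b| := by
  wlog h : b ≤ a generalizing a b
  · rw [abs_sub_comm, abs_sub_comm a b]; exact this hb ha (le_of_not_ge h)
  rw [abs_of_nonneg (sub_nonneg.2 (Real.exp_le_exp.2 h)), abs_of_nonneg (by linarith)]
  have h1 : b - a + 1 ≤ Real.exp (b - a) := Real.add_one_le_exp _
  have h2 : Real.exp b = Real.exp a * Real.exp (b - a) := by
    rw [← Real.exp_add]; ring_nf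
  have h3 : Real.exp a ≤ Real.exp M := Real.exp_le_exp.2 ha
  nlinarith [Real.exp_pos a, Real.exp_pos (b - a)]

lemma cont_integrable {Ω : Type*} [MetricSpace Ω] [CompactSpace Ω] [MeasurableSpace Ω]
    [BorelSpace Ω] (ν : Measure Ω) [IsFiniteMeasure ν] {f : Ω → ℝ} (hf : Continuous f) :
    Integrable f ν :=
  hf.integrable_of_hasCompactSupport (HasCompactSupport.of_compactSpace f)

lemma int_abs_le {Ω : Type*} [MetricSpace Ω] [MeasurableSpace Ω]
    (ν : Measure Ω) [IsProbabilityMeasure ν] (f : Ω → ℝ) (B : ℝ) (hB : ∀ x, |f x| ≤ B) :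
    |∫ x, f x ∂ν| ≤ B := by
  have := norm_integral_le_of_norm_le_const (μ := ν) (f := f) (C := B)
    (Filter.Eventually.of_forall fun x => by simpa [Real.norm_eq_abs] using hB x)
  simpa [Real.norm_eq_abs, measure_univ] using this


/-- Weak convergence `pₙ ⇀ p` implies uniform convergence of the Gibbs densities
`q[pₙ] → q[p]` and of `Ψ(·,pₙ) → Ψ(·,p)`. -/
theorem gibbs_density_and_Psi_uniform_convergence
    {Ω : Type*} [MetricSpace Ω] [CompactSpace Ω] [MeasurableSpace Ω] [BorelSpace Ω]
    (μ : Measure Ω) [IsProbabilityMeasure μ] (β : ℝ) (hβ : 0 < β)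
    (K : Ω × Ω → ℝ) (hK : Continuous K)
    (V : Ω → Measure Ω → ℝ) (hV : ∀ y p, V y p = ∫ x, K (x, y) ∂p)
    (Zq : Measure Ω → ℝ) (hZq : ∀ p, Zq p = ∫ y, Real.exp (β * V y p) ∂μ)
    (qp : Measure Ω → Ω → ℝ) (hqp : ∀ p y, qp p y = Real.exp (β * V y p) / Zq p)
    (Ψ : Ω → Measure Ω → ℝ) (hΨ : ∀ x p, Ψ x p = ∫ y, K (x, y) * qp p y ∂μ)
    (p : ℕ → Measure Ω) (hp : ∀ n, IsProbabilityMeasure (p n))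
    (plim : Measure Ω) [IsProbabilityMeasure plim]
    (hweak : ∀ f : Ω → ℝ, Continuous f → (∃ C : ℝ, ∀ x, |f x| ≤ C) →
      Tendsto (fun n => ∫ x, f x ∂(p n)) atTop (nhds (∫ x, f x ∂plim))) :
    Tendsto (fun n => ⨆ y : Ω, |qp (p n) y - qp plim y|) atTop (nhds 0) ∧
    Tendsto (fun n => ⨆ x : Ω, |Ψ x (p n) - Ψ x plim|) atTop (nhds 0) := by
  -- Ω is nonempty
  have hne : Nonempty Ω := by
    by_contra h
    have h0 : μ Set.univ = 0 := by
      rw [Set.univ_eq_empty_iff.2 (not_nonempty_iff.1 h)]; exact measure_empty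
    rw [measure_univ] at h0; exact one_ne_zero h0
  haveI := hne
  -- bound on K
  obtain ⟨z₀, -, hz₀⟩ := isCompact_univ.exists_isMaxOn (Set.univ_nonempty)
    ((continuous_abs.comp hK).continuousOn)
  set C := |K z₀| with hCdef
  have hC0 : (0:ℝ) ≤ C := abs_nonneg _
  have hKb : ∀ z, |K z| ≤ C := fun z => hz₀ (Set.mem_univ z)
  -- bound on V
  have hVb : ∀ (ν : Measure Ω), IsProbabilityMeasure ν → ∀ y, |V y ν| ≤ C := by
    intro ν hν y
    haveI := hν
    rw [hV]
    exact int_abs_le ν _ C (fun x => hKb (x, y))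
  -- continuity of V in y
  have hVcont : ∀ (ν : Measure Ω), IsFiniteMeasure ν → Continuous fun y => V y ν := by
    intro ν hν
    haveI := hν
    have : Continuous fun y => ∫ x, K (x, y) ∂ν := by
      apply continuous_of_dominated (bound := fun _ => C)
      · exact fun y => (hK.comp (continuous_id.prodMk continuous_const)).aestronglyMeasurable
      · exact fun y => Filter.Eventually.of_forall fun x => by
          simpa [Real.norm_eq_abs] using hKb (x, y)
      · exact integrable_const C
      · exact Filter.Eventually.of_forall fun x => hK.comp (continuous_const.prodMk continuous_id)
    simpa only [← hV] using this
  -- continuity of qp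
  have hqcont : ∀ (ν : Measure Ω), IsFiniteMeasure ν → Continuous (qp ν) := by
    intro ν hν
    have : Continuous fun y => Real.exp (β * V y ν) / Zq ν :=
      (Real.continuous_exp.comp (continuous_const.mul (hVcont ν hν))).div_const _
    simpa only [← hqp] using this
  set m := Real.exp (-(β * C)) with hmdef
  set M1 := Real.exp (β * C) with hM1def
  have hm : 0 < m := Real.exp_pos _
  have hM1 : 0 < M1 := Real.exp_pos _
  -- bounds on exp(β V)
  have hEub : ∀ (ν : Measure Ω), IsProbabilityMeasure ν → ∀ y,
      Real.exp (β * V y ν) ≤ M1 := by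
    intro ν hν y
    apply Real.exp_le_exp.2
    have := (abs_le.1 (hVb ν hν y)).2
    nlinarith
  -- bounds on Zq
  have hZlb : ∀ (ν : Measure Ω), IsProbabilityMeasure ν → m ≤ Zq ν := by
    intro ν hν
    rw [hZq]
    haveI := hν
    have hint : Integrable (fun y => Real.exp (β * V y ν)) μ :=
      cont_integrable μ (Real.continuous_exp.comp (continuous_const.mul (hVcont ν inferInstance)))
    have : ∫ _y, m ∂μ ≤ ∫ y, Real.exp (β * V y ν) ∂μ := by
      apply integral_mono (integrable_const m) hint
      intro y
      apply Real.exp_le_exp.2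
      have := (abs_le.1 (hVb ν hν y)).1
      nlinarith
    simpa [measure_univ] using this
  have hZub : ∀ (ν : Measure Ω), IsProbabilityMeasure ν → Zq ν ≤ M1 := by
    intro ν hν
    rw [hZq]
    calc ∫ y, Real.exp (β * V y ν) ∂μ ≤ |∫ y, Real.exp (β * V y ν) ∂μ| := le_abs_self _
    _ ≤ M1 := int_abs_le μ _ M1 (fun y => by
        rw [abs_of_pos (Real.exp_pos _)]; exact hEub ν hν y)
  -- bound on qp
  have hqb : ∀ (ν : Measure Ω), IsProbabilityMeasure ν → ∀ y, |qp ν y| ≤ M1 / m := by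
    intro ν hν y
    rw [hqp, abs_of_nonneg (div_nonneg (Real.exp_pos _).le (hm.trans_le (hZlb ν hν)).le)]
    exact div_le_div₀ hM1.le (hEub ν hν y) hm (hZlb ν hν)
  -- Step A : uniform convergence of V
  have hVsup : ∀ ε > (0:ℝ), ∀ᶠ n in atTop, ∀ y, |V y (p n) - V y plim| ≤ ε := by
    intro ε hε
    obtain ⟨δ, hδ, hδK⟩ := Metric.uniformContinuous_iff.mp
      (CompactSpace.uniformContinuous_of_continuous hK) (ε/3) (by positivity)
    obtain ⟨t, ht⟩ := isCompact_univ.elim_finite_subcover (fun i : Ω => Metric.ball i δ)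
      (fun i => Metric.isOpen_ball) (fun x _ => Set.mem_iUnion.2 ⟨x, Metric.mem_ball_self hδ⟩)
    have hpt : ∀ i ∈ t, ∀ᶠ n in atTop, |V i (p n) - V i plim| < ε/3 := by
      intro i _
      have hcont : Continuous fun x => K (x, i) := hK.comp (continuous_id.prodMk continuous_const)
      have h1 := hweak (fun x => K (x, i)) hcont ⟨C, fun x => hKb _⟩
      have h2 := Metric.tendsto_nhds.mp h1 (ε/3) (by positivity)
      filter_upwards [h2] with n hn
      rw [hV i (p n), hV i plim, ← Real.dist_eq]
      exact hn
    have hall := (eventually_all_finset t).2 hpt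
    filter_upwards [hall] with n hn y
    haveI := hp n
    obtain ⟨i, hit, hyi⟩ : ∃ i ∈ t, y ∈ Metric.ball i δ := by
      have := ht (Set.mem_univ y); simpa using this
    have hnear : ∀ (ν : Measure Ω), IsProbabilityMeasure ν → |V y ν - V i ν| ≤ ε/3 := by
      intro ν hν
      haveI := hν
      have hcy : Continuous fun x => K (x, y) := hK.comp (continuous_id.prodMk continuous_const)
      have hci : Continuous fun x => K (x, i) := hK.comp (continuous_id.prodMk continuous_const)
      rw [hV, hV, ← integral_sub (cont_integrable ν hcy) (cont_integrable ν hci)]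
      apply int_abs_le ν _ (ε/3)
      intro x
      have hdxy : dist ((x, y) : Ω × Ω) (x, i) < δ := by
        rw [Prod.dist_eq]; simp only [dist_self]
        exact max_lt hδ (Metric.mem_ball.1 hyi)
      have := hδK hdxy
      rw [Real.dist_eq] at this
      exact this.le
    have h2 := hn i hit
    have t1 := abs_sub_le (V y (p n)) (V i (p n)) (V y plim)
    have t2 := abs_sub_le (V i (p n)) (V i plim) (V y plim)
    have t3 := abs_sub_comm (V i plim) (V y plim)
    linarith [hnear (p n) (hp n), hnear plim inferInstance]
  -- Step B: eventual uniform bound on qp difference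
  have hqsup : ∀ ε > (0:ℝ), ∀ᶠ n in atTop, ∀ y, |qp (p n) y - qp plim y| ≤ ε := by
    intro ε hε
    set ε' := ε * m^2 / (4 * M1^2 * β) with hε'def
    have hε' : 0 < ε' := by positivity
    filter_upwards [hVsup ε' hε'] with n hVn y
    haveI := hp n
    set η := M1 * (β * ε') with hηdef
    -- bound on exp difference
    have hEdiff : ∀ z, |Real.exp (β * V z (p n)) - Real.exp (β * V z plim)| ≤ η := by
      intro z
      have hb1 : β * V z (p n) ≤ β * C := by nlinarith [(abs_le.1 (hVb (p n) (hp n) z)).2]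
      have hb2 : β * V z plim ≤ β * C := by nlinarith [(abs_le.1 (hVb plim inferInstance z)).2]
      calc |Real.exp (β * V z (p n)) - Real.exp (β * V z plim)|
          ≤ M1 * |β * V z (p n) - β * V z plim| := exp_abs_sub_le hb1 hb2
        _ = M1 * (β * |V z (p n) - V z plim|) := by
            rw [← mul_sub, abs_mul, abs_of_pos hβ]
        _ ≤ η := by
            rw [hηdef]
            gcongr
            exact hVn z
    -- bound on Zq difference
    have hZdiff : |Zq (p n) - Zq plim| ≤ η := by
      have hi1 : Integrable (fun z => Real.exp (β * V z (p n))) μ :=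
        cont_integrable μ (Real.continuous_exp.comp (continuous_const.mul (hVcont (p n) inferInstance)))
      have hi2 : Integrable (fun z => Real.exp (β * V z plim)) μ :=
        cont_integrable μ (Real.continuous_exp.comp (continuous_const.mul (hVcont plim inferInstance)))
      rw [hZq, hZq, ← integral_sub hi1 hi2]
      exact int_abs_le μ _ η hEdiff
    -- combine
    have hbne : Zq (p n) ≠ 0 := (hm.trans_le (hZlb (p n) (hp n))).ne'
    have hdne : Zq plim ≠ 0 := (hm.trans_le (hZlb plim inferInstance)).ne'
    rw [hqp, hqp, div_sub_div _ _ hbne hdne, abs_div]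
    have hnum : |Real.exp (β * V y (p n)) * Zq plim - Zq (p n) * Real.exp (β * V y plim)|
        ≤ η * M1 + M1 * η := by
      have hre : Real.exp (β * V y (p n)) * Zq plim - Zq (p n) * Real.exp (β * V y plim)
          = (Real.exp (β * V y (p n)) - Real.exp (β * V y plim)) * Zq plim
            + Real.exp (β * V y plim) * (Zq plim - Zq (p n)) := by ring
      rw [hre]
      calc |(Real.exp (β * V y (p n)) - Real.exp (β * V y plim)) * Zq plim
            + Real.exp (β * V y plim) * (Zq plim - Zq (p n))|
          ≤ |(Real.exp (β * V y (p n)) - Real.exp (β * V y plim))| * |Zq plim|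
            + |Real.exp (β * V y plim)| * |Zq plim - Zq (p n)| := by
            refine (abs_add_le _ _).trans ?_
            rw [abs_mul, abs_mul]
        _ ≤ η * M1 + M1 * η := by
            have e1 := hEdiff y
            have e2 : |Zq plim| ≤ M1 := by
              rw [abs_of_pos (hm.trans_le (hZlb plim inferInstance))]
              exact hZub plim inferInstance
            have e3 : |Real.exp (β * V y plim)| ≤ M1 := by
              rw [abs_of_pos (Real.exp_pos _)]; exact hEub plim inferInstance y
            have e4 : |Zq plim - Zq (p n)| ≤ η := by rw [abs_sub_comm]; exact hZdiff
            have hη0 : 0 ≤ η := by positivity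
            nlinarith [abs_nonneg (Real.exp (β * V y (p n)) - Real.exp (β * V y plim)),
              abs_nonneg (Zq plim - Zq (p n)), abs_nonneg (Real.exp (β * V y plim)),
              abs_nonneg (Zq plim)]
    have hden : m^2 ≤ |Zq (p n) * Zq plim| := by
      rw [abs_of_pos (mul_pos (hm.trans_le (hZlb (p n) (hp n))) (hm.trans_le (hZlb plim inferInstance)))]
      have := hZlb (p n) (hp n)
      have := hZlb plim inferInstance
      nlinarith
    calc |Real.exp (β * V y (p n)) * Zq plim - Zq (p n) * Real.exp (β * V y plim)|
          / |Zq (p n) * Zq plim|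
        ≤ (η * M1 + M1 * η) / m^2 :=
          div_le_div₀ (by positivity) hnum (by positivity) hden
      _ ≤ ε := by
          rw [div_le_iff₀ (by positivity)]
          have h4 : M1^2 * β * ε' = ε * m^2 / 4 := by
            rw [hε'def]; field_simp
          have h5 : η * M1 + M1 * η = 2 * (M1^2 * β * ε') := by rw [hηdef]; ring
          have h6 : 0 < ε * m^2 := by positivity
          linarith
  -- Part 1: tendsto of sup of qp diff
  have part1 : Tendsto (fun n => ⨆ y : Ω, |qp (p n) y - qp plim y|) atTop (nhds 0) := by
    rw [Metric.tendsto_nhds]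
    intro ε hε
    filter_upwards [hqsup (ε/2) (by positivity)] with n hn
    have hsup_nonneg : 0 ≤ ⨆ y : Ω, |qp (p n) y - qp plim y| :=
      Real.iSup_nonneg fun y => abs_nonneg _
    have hsup_le : (⨆ y : Ω, |qp (p n) y - qp plim y|) ≤ ε/2 :=
      Real.iSup_le (fun y => hn y) (by positivity)
    rw [Real.dist_eq, sub_zero, abs_of_nonneg hsup_nonneg]
    linarith
  refine ⟨part1, ?_⟩
  -- Part 2
  have hbdd : ∀ n, BddAbove (Set.range fun y => |qp (p n) y - qp plim y|) := by
    intro n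
    refine ⟨2 * (M1 / m), ?_⟩
    rintro _ ⟨y, rfl⟩
    have h1 := hqb (p n) (hp n) y
    have h2 := hqb plim inferInstance y
    calc |qp (p n) y - qp plim y| ≤ |qp (p n) y| + |qp plim y| := abs_sub _ _
      _ ≤ 2 * (M1 / m) := by linarith
  have hΨbound : ∀ n x, |Ψ x (p n) - Ψ x plim| ≤ C * ⨆ y : Ω, |qp (p n) y - qp plim y| := by
    intro n x
    haveI := hp n
    have hcx : Continuous fun y => K (x, y) := hK.comp (continuous_const.prodMk continuous_id)
    have hi1 : Integrable (fun y => K (x, y) * qp (p n) y) μ :=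
      cont_integrable μ (hcx.mul (hqcont (p n) inferInstance))
    have hi2 : Integrable (fun y => K (x, y) * qp plim y) μ :=
      cont_integrable μ (hcx.mul (hqcont plim inferInstance))
    rw [hΨ, hΨ, ← integral_sub hi1 hi2]
    apply int_abs_le μ _ _
    intro y
    have : K (x, y) * qp (p n) y - K (x, y) * qp plim y
        = K (x, y) * (qp (p n) y - qp plim y) := by ring
    rw [this, abs_mul]
    exact mul_le_mul (hKb _) (le_ciSup (hbdd n) y) (abs_nonneg _) hC0
  have hg : Tendsto (fun n => C * ⨆ y : Ω, |qp (p n) y - qp plim y|) atTop (nhds 0) := by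
    have := part1.const_mul C
    simpa using this
  apply squeeze_zero (fun n => Real.iSup_nonneg fun x => abs_nonneg _) (fun n => ?_) hg
  exact Real.iSup_le (fun x => hΨbound n x)
    (mul_nonneg hC0 (Real.iSup_nonneg fun y => abs_nonneg _))
end
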